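/- Let A and B be commutative Noetherian algebras over a ring V, and let K be a field containing V such that we may form A_K = A ⊗ K and B_K = B ⊗ K. If A_K → B_K is faithfully flat and M is a finitely generated A_K-module such that B_K ⊗_{A_K} M is a projective B_K-module, then M is a projective A_K-module. -/

import Mathlib

open TensorProduct

/- Projective base change is flat, flatness descends along the faithfully flat map
`A_K → B_K`, and a finitely presented flat module is projective; over the Noetherian ring
`A_K` every finite module is finitely presented. -/

theorem Module.Projective.of_projective_tensorProduct_of_faithfullyFlat
    (R S M : Type*) [CommRing R] [CommRing S] [Algebra R S] [Module.FaithfullyFlat R S]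
    [AddCommGroup M] [Module R M] [Module.FinitePresentation R M]
    [Module.Projective S (S ⊗[R] M)] : Module.Projective R M :=
  have : Module.Flat R M := .of_flat_tensorProduct R M S
  Module.Flat.projective_of_finitePresentation

theorem stmt_0_general (V K A B : Type) [CommRing V] [Field K] [Algebra V K]
    [CommRing A] [CommRing B] [Algebra V A] [Algebra V B]
    [IsNoetherianRing (A ⊗[V] K)]
    [Algebra (A ⊗[V] K) (B ⊗[V] K)]
    [Module.FaithfullyFlat (A ⊗[V] K) (B ⊗[V] K)]
    (M : Type) [AddCommGroup M] [Module (A ⊗[V] K) M]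
    [Module.Finite (A ⊗[V] K) M]
    (h : Module.Projective (B ⊗[V] K) ((B ⊗[V] K) ⊗[A ⊗[V] K] M)) :
    Module.Projective (A ⊗[V] K) M :=
  have : Module.FinitePresentation (A ⊗[V] K) M := Module.finitePresentation_of_finite _ _
  .of_projective_tensorProduct_of_faithfullyFlat _ (B ⊗[V] K) M

/-- Let `A` and `B` be commutative Noetherian algebras over a ring `V`, and `K` a field
containing `V`, forming `A_K = A ⊗ K`, `B_K = B ⊗ K`.  If `A_K → B_K` is faithfully flat and
`M` is a finitely generated `A_K`-module such that `B_K ⊗ M` is projective over `B_K`, then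
`M` is projective over `A_K`. -/
theorem stmt_0 (V K A B : Type) [CommRing V] [Field K] [Algebra V K]
    [CommRing A] [CommRing B] [Algebra V A] [Algebra V B]
    [IsNoetherianRing (A ⊗[V] K)] [IsNoetherianRing (B ⊗[V] K)]
    [Algebra (A ⊗[V] K) (B ⊗[V] K)]
    [Module.FaithfullyFlat (A ⊗[V] K) (B ⊗[V] K)]
    (M : Type) [AddCommGroup M] [Module (A ⊗[V] K) M]
    [Module.Finite (A ⊗[V] K) M]
    (h : Module.Projective (B ⊗[V] K) ((B ⊗[V] K) ⊗[A ⊗[V] K] M)) :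
    Module.Projective (A ⊗[V] K) M :=
  stmt_0_general V K A B M h
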